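/- Let r ≥ 1 be an integer and let φ_r be the smallest positive solution of θ·(1 − 1/(r+1) − (r−1)θ)^{r−1} = w(r,θ). Define H(r,θ) = w(r,φ_r) for 0 ≤ θ ≤ φ_r and H(r,θ) = w(r,θ) for φ_r ≤ θ ≤ 1/(r+1). Then for all θ ∈ [0, 1/(r+1)], h(r,θ) ≥ H(r,θ). -/

import Mathlib

/-!
Write `Λ(x) = x log x − x` and `b(x) = 1 − 1/(r+1) − (r−1)x` for the largest vertex of an
`(r,x,n)`-cover. Then `(1/(r+1) − x) · log w(r,x) = Λ(b(x)) − Λ(x) = ∫_x^{b(x)} log`, so bounds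
on `h(Q)` come from comparing Riemann sums of `log` over the vertices with this integral.

In an `(r,θ,n)`-cover at most `t` edges meet the `t` smallest vertices; the other `k ≥ n − t`
edges, each of product at most `h(Q)`, cover `rk` vertices of index `≥ t`, so `h(Q)^k` dominates
the product of the `rk` consecutive vertices from index `t` on. With `t = 0` the right-endpoint
Riemann sum of the increasing `log` gives `h(Q) ≥ w(r,θ)`. For `θ ≤ φ` take `t` maximal with
`A = θ + t(1/(r+1) − θ)/n ≤ φ`: for `r ≥ 2` the midpoint rule for the concave `log`, the root
equation `log w(r,φ) = log φ + (r−1) log b(φ)` and a monotonicity argument in `u = φ − A` give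
`h(Q) ≥ w(r,φ)`. If `r = 1` or `φ = 1/(r+1)` then `w(r,φ) ≤ (1/(r+1))^r`, and the vertices from
index `n − 1` on are all at least `1/(r+1)`.
-/

open Finset

namespace ListCol

/-! ### Covers and the functions `h(s,θ,n)`, `h(s,θ)` -/

/-- The vertex set `{θ + (1/(s+1) − θ)·j/n : j ∈ [sn]}` of an `(s,θ,n)`-cover. -/
noncomputable def coverVertexSet (s : ℕ) (θ : ℝ) (n : ℕ) : Finset ℝ :=
  (Finset.range (s * n)).image fun j : ℕ => θ + (1 / ((s : ℝ) + 1) - θ) * ((j : ℝ) + 1) / (n : ℝ)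

/-- `E` is the edge set of an `(s,θ,n)`-cover: `s`-element pairwise disjoint edges
whose union is `coverVertexSet s θ n`. -/
def IsCover (s : ℕ) (θ : ℝ) (n : ℕ) (E : Finset (Finset ℝ)) : Prop :=
  (∀ e ∈ E, e.card = s) ∧
  (∀ e ∈ E, ∀ f ∈ E, e ≠ f → Disjoint e f) ∧
  (∀ y : ℝ, (∃ e ∈ E, y ∈ e) ↔ y ∈ coverVertexSet s θ n)

/-- `h(Q) = max over edges e of ∏_{y ∈ e} y`. -/
noncomputable def hEdge (E : Finset (Finset ℝ)) : ℝ :=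
  sSup {y : ℝ | ∃ e ∈ E, y = ∏ z ∈ e, z}

/-- `h(s,θ,n) = min { h(Q) : Q an (s,θ,n)-cover }`. -/
noncomputable def hCovN (s : ℕ) (θ : ℝ) (n : ℕ) : ℝ :=
  sInf {y : ℝ | ∃ E : Finset (Finset ℝ), IsCover s θ n E ∧ y = hEdge E}

/-- `h(s,θ) = inf { h(s,θ,n) : n ≥ 1 }` for `θ < 1/(s+1)`, and
`h(s,1/(s+1)) = (1/(s+1))^s`. -/
noncomputable def hCov (s : ℕ) (θ : ℝ) : ℝ :=
  if θ = 1 / ((s : ℝ) + 1) then (1 / ((s : ℝ) + 1)) ^ s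
  else sInf {y : ℝ | ∃ n : ℕ, 1 ≤ n ∧ y = hCovN s θ n}

/-! ### The function `w(r,θ)` -/

/-- `w(r,θ) = e^{−r}·(u(1 − 1/(r+1) − (r−1)θ)/u(θ))^{1/(1/(r+1) − θ)}` where
`u(y) = y^y` (so `u(0) = 1`, as `0^0 = 1` for `Real.rpow`), extended continuously
to `θ = 1/(r+1)` by its limit `(1/(r+1))^r`. -/
noncomputable def wFun (r : ℕ) (θ : ℝ) : ℝ :=
  if θ = 1 / ((r : ℝ) + 1) then (1 / ((r : ℝ) + 1)) ^ r
  else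
    Real.exp (-(r : ℝ)) *
      (((1 - 1 / ((r : ℝ) + 1) - ((r : ℝ) - 1) * θ) ^
          (1 - 1 / ((r : ℝ) + 1) - ((r : ℝ) - 1) * θ)) / θ ^ θ) ^
        (1 / (1 / ((r : ℝ) + 1) - θ))

open Real

noncomputable def logPrimitive (x : ℝ) : ℝ := x * log x - x

lemma hasDerivAt_logPrimitive {x : ℝ} (hx : x ≠ 0) : HasDerivAt logPrimitive (log x) x := by
  have h := (hasDerivAt_mul_log hx).sub (hasDerivAt_id' x)
  rw [add_sub_cancel_right] at h
  exact h

lemma logPrimitive_sub_le_mul_log {x y : ℝ} (hx : 0 ≤ x) (hxy : x ≤ y) :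
    logPrimitive y - logPrimitive x ≤ (y - x) * log y := by
  rcases hx.eq_or_lt with rfl | hx
  · simp only [logPrimitive, log_zero, mul_zero, sub_zero, sub_self]
    nlinarith [mul_le_mul_of_nonneg_left hxy hxy]
  have hlog : log y - log x ≤ y / x - 1 := by
    rw [← log_div (hx.trans_le hxy).ne' hx.ne']
    exact log_le_sub_one_of_pos (div_pos (hx.trans_le hxy) hx)
  have : x * (y / x - 1) = y - x := by field_simp
  simp only [logPrimitive]
  nlinarith [mul_le_mul_of_nonneg_left hlog hx.le]

lemma mul_log_le_logPrimitive_sub {x y : ℝ} (hx : 0 < x) (hxy : x ≤ y) :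
    (y - x) * log x ≤ logPrimitive y - logPrimitive x := by
  have hy : 0 < y := hx.trans_le hxy
  have hlog : log x - log y ≤ x / y - 1 := by
    rw [← log_div hx.ne' hy.ne']
    exact log_le_sub_one_of_pos (div_pos hx hy)
  have : y * (x / y - 1) = x - y := by field_simp
  simp only [logPrimitive]
  nlinarith [mul_le_mul_of_nonneg_left hlog hy.le]

lemma logPrimitive_sub_le_mul_log_midpoint {a b : ℝ} (ha : 0 < a) (hab : a ≤ b) :
    logPrimitive b - logPrimitive a ≤ (b - a) * log ((a + b) / 2) := by
  let f : ℝ → ℝ := fun x => (x - a) * log ((a + x) / 2) - logPrimitive x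
  have hf : ∀ x ∈ Set.Ici a,
      HasDerivAt f (log ((a + x) / 2) + (x - a) / (a + x) - log x) x := by
    intro x hx
    have hx0 : 0 < x := ha.trans_le hx
    have hmid : HasDerivAt (fun x => log ((a + x) / 2)) (1 / (a + x)) x := by
      refine (((hasDerivAt_id' x).const_add a).div_const 2 |>.log (by positivity)).congr_deriv ?_
      field_simp
    refine ((((hasDerivAt_id' x).sub_const a).mul hmid).sub
      (hasDerivAt_logPrimitive hx0.ne')).congr_deriv ?_
    ring
  have hmono : MonotoneOn f (Set.Ici a) := by
    refine monotoneOn_of_hasDerivWithinAt_nonneg (convex_Ici a)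
      (fun x hx => (hf x hx).continuousAt.continuousWithinAt)
      (fun x hx => (hf x (interior_subset hx)).hasDerivWithinAt) fun x hx => ?_
    rw [interior_Ici] at hx
    have hx0 : 0 < x := ha.trans hx
    have hlog : log x - log ((a + x) / 2) ≤ x / ((a + x) / 2) - 1 := by
      rw [← log_div hx0.ne' (by positivity)]
      exact log_le_sub_one_of_pos (by positivity)
    have : x / ((a + x) / 2) - 1 = (x - a) / (a + x) := by field_simp; ring
    linarith
  have := hmono Set.self_mem_Ici hab hab
  simp only [f, sub_self, zero_mul, zero_sub] at this
  linarith

lemma logPrimitive_sub_shift_le {x' x C : ℝ} (hx' : 0 < x') (hx'x : x' ≤ x) (hxC : x ≤ x' + C) :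
    logPrimitive (x' + C) - logPrimitive x' ≤ logPrimitive (x + C) - logPrimitive x := by
  have h1 := mul_log_le_logPrimitive_sub (x := x' + C) (y := x + C) (by linarith) (by linarith)
  have h2 := logPrimitive_sub_le_mul_log hx'.le hx'x
  have h3 : (x - x') * log x ≤ (x - x') * log (x' + C) :=
    mul_le_mul_of_nonneg_left (log_le_log (by linarith) hxC) (by linarith)
  rw [show x + C - (x' + C) = x - x' by ring] at h1
  linarith

lemma logPrimitive_sub_le_sum_log {x₀ h : ℝ} (hx₀ : 0 ≤ x₀) (hh : 0 < h) (K : ℕ) :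
    logPrimitive (x₀ + K * h) - logPrimitive x₀ ≤
      h * ∑ i ∈ range K, log (x₀ + (i + 1) * h) := by
  have := Finset.sum_range_sub (fun i : ℕ => logPrimitive (x₀ + i * h)) K
  simp only [Nat.cast_add, Nat.cast_one, Nat.cast_zero, zero_mul, add_zero] at this
  rw [← this, mul_sum]
  refine sum_le_sum fun i _ => ?_
  have := logPrimitive_sub_le_mul_log (x := x₀ + i * h) (y := x₀ + (i + 1) * h)
    (by positivity) (by nlinarith)
  linarith [show x₀ + (i + 1) * h - (x₀ + i * h) = h by ring]

lemma logPrimitive_sub_le_sum_log_midpoint {x₀ h : ℝ} (hx₀ : 0 ≤ x₀) (hh : 0 < h) (K : ℕ) :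
    logPrimitive (x₀ + h / 2 + K * h) - logPrimitive (x₀ + h / 2) ≤
      h * ∑ i ∈ range K, log (x₀ + (i + 1) * h) := by
  have := Finset.sum_range_sub (fun i : ℕ => logPrimitive (x₀ + h / 2 + i * h)) K
  simp only [Nat.cast_add, Nat.cast_one, Nat.cast_zero, zero_mul, add_zero] at this
  rw [← this, mul_sum]
  refine sum_le_sum fun i _ => ?_
  have := logPrimitive_sub_le_mul_log_midpoint (a := x₀ + h / 2 + i * h)
    (b := x₀ + h / 2 + (i + 1) * h) (by positivity) (by nlinarith)
  rw [show x₀ + h / 2 + (i + 1) * h - (x₀ + h / 2 + i * h) = h by ring,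
    show (x₀ + h / 2 + i * h + (x₀ + h / 2 + (i + 1) * h)) / 2 = x₀ + (i + 1) * h by ring]
    at this
  exact this

lemma rpow_self_pos {x : ℝ} (hx : 0 ≤ x) : 0 < x ^ x := by
  rcases hx.eq_or_lt with rfl | hx
  · simp
  · exact rpow_pos_of_pos hx x

lemma log_rpow_self {x : ℝ} (hx : 0 ≤ x) : log (x ^ x) = x * log x := by
  rcases hx.eq_or_lt with rfl | hx
  · simp
  · exact log_rpow hx x

/-- The largest vertex `θ + r·(1/(r+1) − θ)` of an `(r,θ,n)`-cover, written as in `wFun`. -/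
noncomputable def maxVertex (r : ℕ) (x : ℝ) : ℝ := 1 - 1 / ((r : ℝ) + 1) - ((r : ℝ) - 1) * x

lemma maxVertex_eq (r : ℕ) (x : ℝ) : maxVertex r x = x + r * (1 / ((r : ℝ) + 1) - x) := by
  unfold maxVertex
  field_simp
  ring

lemma le_maxVertex {r : ℕ} {x : ℝ} (hx : x ≤ 1 / ((r : ℝ) + 1)) : x ≤ maxVertex r x := by
  rw [maxVertex_eq]
  have : 0 ≤ (r : ℝ) * (1 / ((r : ℝ) + 1) - x) := mul_nonneg r.cast_nonneg (by linarith)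
  linarith

/-- `w(r,x)` is the `r`-th power of the geometric mean of `y` over `[x, maxVertex r x]`. -/
lemma mul_log_wFun {r : ℕ} {x : ℝ} (hx : 0 ≤ x) (hxc : x < 1 / ((r : ℝ) + 1)) :
    (1 / ((r : ℝ) + 1) - x) * log (wFun r x) =
      logPrimitive (maxVertex r x) - logPrimitive x := by
  set b := maxVertex r x with hb
  have hb0 : 0 ≤ b := hx.trans (le_maxVertex hxc.le)
  have hδ : 1 / ((r : ℝ) + 1) - x ≠ 0 := (sub_pos.2 hxc).ne'
  have hquot : 0 < b ^ b / x ^ x := div_pos (rpow_self_pos hb0) (rpow_self_pos hx)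
  have hb' : 1 - 1 / ((r : ℝ) + 1) - ((r : ℝ) - 1) * x = b := rfl
  rw [wFun, if_neg hxc.ne, hb', log_mul (exp_pos _).ne' (rpow_pos_of_pos hquot _).ne', log_exp,
    log_rpow hquot, log_div (rpow_self_pos hb0).ne' (rpow_self_pos hx).ne', log_rpow_self hb0,
    log_rpow_self hx]
  have hbx : b - x = r * (1 / ((r : ℝ) + 1) - x) := by rw [hb, maxVertex_eq]; ring
  rw [mul_add, ← mul_assoc, mul_one_div_cancel hδ, one_mul]
  unfold logPrimitive
  linarith

lemma wFun_pos {r : ℕ} {x : ℝ} (hx : 0 ≤ x) (hxc : x ≤ 1 / ((r : ℝ) + 1)) : 0 < wFun r x := by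
  rcases hxc.eq_or_lt with rfl | hxc
  · rw [wFun, if_pos rfl]
    positivity
  · have hb0 : 0 ≤ maxVertex r x := hx.trans (le_maxVertex hxc.le)
    rw [wFun, if_neg hxc.ne]
    exact mul_pos (exp_pos _)
      (rpow_pos_of_pos (div_pos (rpow_self_pos hb0) (rpow_self_pos hx)) _)

lemma wFun_one_le {x : ℝ} (hx : 0 ≤ x) (hxc : x ≤ 1 / 2) : wFun 1 x ≤ 1 / 2 := by
  have hc : 1 / ((1 : ℕ) + 1 : ℝ) = 1 / 2 := by norm_num
  rcases hxc.eq_or_lt with rfl | hxc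
  · rw [wFun, if_pos hc.symm]
    norm_num
  · have hb : maxVertex 1 x = 1 / 2 := by rw [maxVertex_eq, hc]; ring
    have hid := mul_log_wFun (r := 1) hx (by rwa [hc])
    rw [hc, hb] at hid
    have hlog : (1 / 2 - x) * log (wFun 1 x) ≤ (1 / 2 - x) * log (1 / 2) := by
      rw [hid]
      exact logPrimitive_sub_le_mul_log hx hxc.le
    rw [← log_le_log_iff (wFun_pos hx (by rw [hc]; exact hxc.le)) (by norm_num)]
    exact le_of_mul_le_mul_left hlog (by linarith)

lemma log_add_mul_log_le_shifted {ρ φ b u : ℝ} (hρ : 2 ≤ ρ) (hφ : 0 < φ) (hφb : φ ≤ b)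
    (hu0 : 0 ≤ u) (huφ : u ≤ φ) :
    log φ + (ρ - 1) * log b ≤
      (ρ - 1 / 2) * log (b + (ρ - 1 / 2) * u) + 1 / 2 * log (φ - u / 2) := by
  have hb : 0 < b := hφ.trans_le hφb
  have hlogφb : log φ ≤ log b := log_le_log hφ hφb
  rcases le_or_gt (2 * φ) b with hb2 | hb2
  · have h1 : log b ≤ log (b + (ρ - 1 / 2) * u) := log_le_log hb (by nlinarith)
    have h2 : log 2 + log φ ≤ log b := by
      rw [← log_mul two_ne_zero hφ.ne']
      exact log_le_log (by positivity) hb2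
    have h3 : log φ - log 2 ≤ log (φ - u / 2) := by
      rw [← log_div hφ.ne' two_ne_zero]
      exact log_le_log (by positivity) (by linarith)
    nlinarith [mul_le_mul_of_nonneg_left h1 (by linarith : (0 : ℝ) ≤ ρ - 1 / 2)]
  · -- write `u = p φ`; then `b + (ρ - 1/2) u ≥ b (1 + 3p/4)` and `φ - u/2 = φ (1 - p/2)`
    set p := u / φ with hp
    have hp0 : 0 ≤ p := div_nonneg hu0 hφ.le
    have hp1 : p ≤ 1 := (div_le_one hφ).2 huφ
    have hu : u = p * φ := by rw [hp]; field_simp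
    have h1 : log b + log (1 + 3 * p / 4) ≤ log (b + (ρ - 1 / 2) * u) := by
      rw [← log_mul hb.ne' (by positivity)]
      exact log_le_log (by positivity) (by rw [hu]; nlinarith)
    have h2 : log (φ - u / 2) = log φ + log (1 - p / 2) := by
      rw [← log_mul hφ.ne' (by linarith), hu]
      ring_nf
    have hpoly : 0 ≤ 3 * log (1 + 3 * p / 4) + log (1 - p / 2) := by
      have := log_nonneg (show 1 ≤ (1 + 3 * p / 4) ^ 3 * (1 - p / 2) by
        nlinarith [mul_nonneg (mul_nonneg hp0 hp0) hp0])
      rwa [log_mul (by positivity) (by linarith), log_pow, Nat.cast_ofNat] at this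
    have hlog34 : 0 ≤ log (1 + 3 * p / 4) := log_nonneg (by linarith)
    nlinarith [mul_le_mul_of_nonneg_left h1 (by linarith : (0 : ℝ) ≤ ρ - 1 / 2)]

/-- Here `D` is `1/(r+1) − φ` and `hD` is the root equation of `φ`; the difference of the two
sides vanishes at `u = 0` and is increasing by `log_add_mul_log_le_shifted`. -/
lemma mul_log_le_logPrimitive_sub_shifted {ρ φ b D u : ℝ} (hρ : 2 ≤ ρ) (hφ : 0 < φ)
    (hφb : φ ≤ b)
    (hD : logPrimitive b - logPrimitive φ = D * (log φ + (ρ - 1) * log b))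
    (hu0 : 0 ≤ u) (huφ : u ≤ φ) :
    (D + u) * (log φ + (ρ - 1) * log b) ≤
      logPrimitive (b + (ρ - 1 / 2) * u) - logPrimitive (φ - u / 2) := by
  set L := log φ + (ρ - 1) * log b
  let Q : ℝ → ℝ := fun u =>
    logPrimitive (b + (ρ - 1 / 2) * u) - logPrimitive (φ - u / 2) - (D + u) * L
  have hQ : ∀ v ∈ Set.Icc 0 φ, HasDerivAt Q
      ((ρ - 1 / 2) * log (b + (ρ - 1 / 2) * v) + 1 / 2 * log (φ - v / 2) - L) v := by
    rintro v ⟨hv0, hvφ⟩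
    have h1 := (hasDerivAt_logPrimitive (x := b + (ρ - 1 / 2) * v) (by nlinarith)).comp v
      (((hasDerivAt_id' v).const_mul (ρ - 1 / 2)).const_add b)
    have h2 := (hasDerivAt_logPrimitive (x := φ - v / 2) (by linarith)).comp v
      (((hasDerivAt_id' v).div_const 2).const_sub φ)
    have h3 := ((hasDerivAt_id' v).const_add D).mul_const L
    exact ((h1.sub h2).sub h3).congr_deriv (by ring)
  have hmono : MonotoneOn Q (Set.Icc 0 φ) := by
    refine monotoneOn_of_hasDerivWithinAt_nonneg (convex_Icc 0 φ)
      (fun x hx => (hQ x hx).continuousAt.continuousWithinAt)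
      (fun x hx => (hQ x (interior_subset hx)).hasDerivWithinAt) fun x hx => ?_
    rw [interior_Icc] at hx
    linarith [log_add_mul_log_le_shifted hρ hφ hφb hx.1.le hx.2.le]
  have := hmono ⟨le_rfl, hφ.le⟩ ⟨hu0, huφ⟩ hu0
  simp only [Q, mul_zero, add_zero, zero_div, sub_zero] at this
  linarith

lemma mul_log_le_logPrimitive_sub_grid {ρ c φ b A h : ℝ} (hρ : 2 ≤ ρ) (hφ : 0 < φ)
    (hφc : φ ≤ c) (hb : b = φ + ρ * (c - φ))
    (hD : logPrimitive b - logPrimitive φ = (c - φ) * (log φ + (ρ - 1) * log b))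
    (hA0 : 0 ≤ A) (hAφ : A ≤ φ) (hφh : φ < A + h) (hhc : h ≤ c - A) :
    (c - A) * (log φ + (ρ - 1) * log b) ≤
      logPrimitive (A + h / 2 + ρ * (c - A)) - logPrimitive (A + h / 2) := by
  have hφb : φ ≤ b := by rw [hb]; nlinarith
  have hQ := mul_log_le_logPrimitive_sub_shifted hρ hφ hφb hD (u := φ - A) (by linarith)
    (by linarith)
  rw [show c - φ + (φ - A) = c - A by ring,
    show b + (ρ - 1 / 2) * (φ - A) = (A + φ) / 2 + ρ * (c - A) by rw [hb]; ring,
    show φ - (φ - A) / 2 = (A + φ) / 2 by ring] at hQ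
  refine hQ.trans (logPrimitive_sub_shift_le (by linarith) (by linarith) ?_)
  nlinarith

/-- For `m = m₀` this is the midpoint rule; each further block of `r` terms exceeds
`r log b ≥ log φ + (r - 1) log b`. -/
lemma mul_log_le_sum_log_grid {r m₀ m : ℕ} {c φ b A h : ℝ} (hr : 2 ≤ r) (hφ : 0 < φ)
    (hφc : φ ≤ c) (hb : b = φ + r * (c - φ))
    (hD : logPrimitive b - logPrimitive φ = (c - φ) * (log φ + (r - 1) * log b))
    (hA0 : 0 ≤ A) (hAφ : A ≤ φ) (hφh : φ < A + h) (hh : 0 < h)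
    (hm₀ : 1 ≤ m₀) (hcA : c - A = m₀ * h) (hm : m₀ ≤ m) :
    m * (log φ + (r - 1) * log b) ≤ ∑ i ∈ range (r * m), log (A + (i + 1) * h) := by
  have hr' : (2 : ℝ) ≤ r := by exact_mod_cast hr
  have hφb : φ ≤ b := by rw [hb]; nlinarith
  have hrm₀ : ((r * m₀ : ℕ) : ℝ) * h = r * (c - A) := by push_cast; rw [hcA]; ring
  induction m, hm using Nat.le_induction with
  | base =>
    have hgrid := mul_log_le_logPrimitive_sub_grid hr' hφ hφc hb hD hA0 hAφ hφh
      (by rw [hcA]; nlinarith [(Nat.one_le_cast (α := ℝ)).2 hm₀])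
    have hsum := logPrimitive_sub_le_sum_log_midpoint hA0 hh (r * m₀)
    rw [hrm₀, hcA] at hsum
    rw [hcA] at hgrid
    refine le_of_mul_le_mul_left ?_ hh
    linarith
  | succ m hm ih =>
    have hblock : ∀ i ∈ range r, log b ≤ log (A + ((r * m + i : ℕ) + 1) * h) := by
      intro i _
      refine log_le_log (hφ.trans_le hφb) ?_
      have : ((r * m₀ : ℕ) : ℝ) ≤ (r * m + i : ℕ) :=
        Nat.cast_le.2 ((Nat.mul_le_mul_left r hm).trans (Nat.le_add_right _ _))
      have : (r - 1) * A ≤ (r - 1) * φ := mul_le_mul_of_nonneg_left hAφ (by linarith)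
      rw [hb]
      nlinarith
    have hlogφ : log φ ≤ log b := log_le_log hφ hφb
    rw [Nat.mul_succ, sum_range_add]
    have := sum_le_sum hblock
    simp only [sum_const, card_range, nsmul_eq_mul] at this
    push_cast at this ih ⊢
    nlinarith

lemma pow_le_prod_of_mul_log_le {ι : Type*} {s : Finset ι} {W : ℝ} {f : ι → ℝ} {m : ℕ}
    (hW : 0 < W) (hf : ∀ i ∈ s, 0 < f i) (hlog : m * log W ≤ ∑ i ∈ s, log (f i)) :
    W ^ m ≤ ∏ i ∈ s, f i := by
  rwa [← log_le_log_iff (pow_pos hW m) (prod_pos hf), log_pow,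
    log_prod fun i hi => (hf i hi).ne']

noncomputable def coverPoint (s : ℕ) (θ : ℝ) (n j : ℕ) : ℝ :=
  θ + (1 / ((s : ℝ) + 1) - θ) * ((j : ℝ) + 1) / (n : ℝ)

section CoverPoint

variable {s n : ℕ} {θ : ℝ}

lemma coverVertexSet_eq_image : coverVertexSet s θ n = (range (s * n)).image (coverPoint s θ n) :=
  rfl

lemma coverPoint_add (t i : ℕ) :
    coverPoint s θ n (t + i) =
      θ + t * ((1 / ((s : ℝ) + 1) - θ) / n) + (i + 1) * ((1 / ((s : ℝ) + 1) - θ) / n) := by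
  unfold coverPoint
  push_cast
  ring

lemma coverPoint_strictMono (hθ : θ < 1 / ((s : ℝ) + 1)) (hn : 0 < n) :
    StrictMono (coverPoint s θ n) := by
  intro i j hij
  have : (0 : ℝ) < n := by exact_mod_cast hn
  have : 0 < 1 / ((s : ℝ) + 1) - θ := by linarith
  unfold coverPoint
  gcongr

lemma coverPoint_pos (hθ0 : 0 ≤ θ) (hθ : θ < 1 / ((s : ℝ) + 1)) (hn : 0 < n) (j : ℕ) :
    0 < coverPoint s θ n j := by
  have : 0 < (1 / ((s : ℝ) + 1) - θ) * ((j : ℝ) + 1) / n :=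
    div_pos (mul_pos (by linarith) (by positivity)) (by exact_mod_cast hn)
  unfold coverPoint
  linarith

end CoverPoint

lemma le_hEdge {E : Finset (Finset ℝ)} {e : Finset ℝ} (he : e ∈ E) : ∏ z ∈ e, z ≤ hEdge E := by
  refine le_csSup ?_ ⟨e, he, rfl⟩
  refine ((E.image fun e => ∏ z ∈ e, z).finite_toSet.subset ?_).bddAbove
  rintro _ ⟨e, he, rfl⟩
  exact mem_image_of_mem _ he

lemma prod_Ico_le_prod_of_forall_exists_le {g : ℕ → ℝ} (hg : StrictMono g) (hg0 : ∀ j, 0 ≤ g j)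
    (U : Finset ℝ) {a : ℕ} (hU : ∀ y ∈ U, ∃ j, a ≤ j ∧ g j = y) :
    ∏ j ∈ Ico a (a + U.card), g j ≤ ∏ y ∈ U, y := by
  classical
  induction U using Finset.induction_on_min generalizing a with
  | empty => simp
  | insert y U hyU ih =>
    obtain ⟨j, haj, rfl⟩ := hU _ (mem_insert_self _ _)
    have hU' : ∀ z ∈ U, ∃ k, a + 1 ≤ k ∧ g k = z := by
      intro z hz
      obtain ⟨k, -, rfl⟩ := hU z (mem_insert_of_mem hz)
      exact ⟨k, by have := hg.lt_iff_lt.1 (hyU _ hz); omega, rfl⟩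
    rw [card_insert_of_notMem fun h => (hyU _ h).false, prod_insert fun h => (hyU _ h).false,
      prod_eq_prod_Ico_succ_bot (by omega), show a + (U.card + 1) = a + 1 + U.card by ring]
    exact mul_le_mul (hg.monotone haj) (ih hU') (prod_nonneg fun _ _ => hg0 _) (hg0 j)

namespace IsCover

variable {r n : ℕ} {θ : ℝ} {E : Finset (Finset ℝ)}

lemma pos (hE : IsCover r θ n E) (hθ0 : 0 ≤ θ) (hθ : θ < 1 / ((r : ℝ) + 1)) (hn : 0 < n) :
    ∀ e ∈ E, ∀ z ∈ e, 0 < z := by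
  intro e he z hz
  obtain ⟨j, -, rfl⟩ := mem_image.1 ((hE.2.2 z).1 ⟨e, he, hz⟩)
  exact coverPoint_pos hθ0 hθ hn j

lemma hEdge_nonneg (hE : IsCover r θ n E) (hθ0 : 0 ≤ θ) (hθ : θ < 1 / ((r : ℝ) + 1))
    (hn : 0 < n) : 0 ≤ hEdge E :=
  Real.sSup_nonneg <| by
    rintro _ ⟨e, he, rfl⟩
    exact prod_nonneg fun z hz => (hE.pos hθ0 hθ hn e he z hz).le

lemma card_biUnion {T : Finset (Finset ℝ)} (hE : IsCover r θ n E) (hT : T ⊆ E) :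
    (T.biUnion id).card = r * T.card := by
  rw [Finset.card_biUnion (t := id) fun e he f hf hef => hE.2.1 e (hT he) f (hT hf) hef,
    sum_congr rfl fun e he => (hE.1 e (hT he) : (id e).card = r), sum_const, smul_eq_mul, mul_comm]

lemma card_eq (hE : IsCover r θ n E) (hr : 0 < r) (hθ : θ < 1 / ((r : ℝ) + 1)) (hn : 0 < n) :
    E.card = n := by
  have hV : E.biUnion id = coverVertexSet r θ n := by
    ext y
    simpa using hE.2.2 y
  have := hE.card_biUnion subset_rfl
  rw [hV, coverVertexSet_eq_image,
    card_image_of_injective _ (coverPoint_strictMono hθ hn).injective, card_range] at this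
  exact (Nat.eq_of_mul_eq_mul_left hr this).symm

/-- The edges meeting the `t` smallest vertices number at most `t`; the others cover at least
`r (n - t)` vertices, all of index `≥ t`. -/
lemma exists_prod_le_hEdge_pow (hE : IsCover r θ n E) (hr : 0 < r) (hθ0 : 0 ≤ θ)
    (hθ : θ < 1 / ((r : ℝ) + 1)) (hn : 0 < n) (t : ℕ) :
    ∃ k ≤ n, n - t ≤ k ∧ ∏ i ∈ range (r * k), coverPoint r θ n (t + i) ≤ hEdge E ^ k := by
  classical
  set g := coverPoint r θ n
  set B := (range t).image g
  set S := E.filter fun e => ¬Disjoint e B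
  set T := E.filter fun e => Disjoint e B
  have hS : S.card ≤ t := by
    refine (card_le_card_of_forall_subsingleton (t := B) (fun e y => y ∈ e) ?_ ?_).trans
      (card_image_le.trans (card_range t).le)
    · intro e he
      obtain ⟨y, hye, hyB⟩ := not_disjoint_iff.1 (mem_filter.1 he).2
      exact ⟨y, hyB, hye⟩
    · rintro y - e ⟨he, hye⟩ f ⟨hf, hyf⟩
      by_contra hef
      exact disjoint_left.1 (hE.2.1 e (mem_filter.1 he).1 f (mem_filter.1 hf).1 hef) hye hyf
  have hST : S.card + T.card = n := by
    rw [← hE.card_eq hr hθ hn, add_comm]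
    exact card_filter_add_card_filter_not _
  have hTE : T ⊆ E := filter_subset _ _
  have hU : ∀ y ∈ T.biUnion id, ∃ j, t ≤ j ∧ g j = y := by
    intro y hy
    obtain ⟨e, heT, hye⟩ := mem_biUnion.1 hy
    obtain ⟨j, -, rfl⟩ := mem_image.1 ((hE.2.2 _).1 ⟨e, hTE heT, hye⟩)
    refine ⟨j, not_lt.1 fun hjt => disjoint_left.1 (mem_filter.1 heT).2 hye ?_, rfl⟩
    exact mem_image_of_mem g (mem_range.2 hjt)
  refine ⟨T.card, by omega, by omega, ?_⟩
  calc ∏ i ∈ range (r * T.card), g (t + i)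
      = ∏ j ∈ Ico t (t + (T.biUnion id).card), g j := by
        rw [hE.card_biUnion hTE, prod_Ico_eq_prod_range, Nat.add_sub_cancel_left]
    _ ≤ ∏ y ∈ T.biUnion id, y :=
        prod_Ico_le_prod_of_forall_exists_le (coverPoint_strictMono hθ hn)
          (fun j => (coverPoint_pos hθ0 hθ hn j).le) _ hU
    _ = ∏ e ∈ T, ∏ y ∈ e, y :=
        prod_biUnion fun e he f hf hef => hE.2.1 e (hTE he) f (hTE hf) hef
    _ ≤ ∏ _e ∈ T, hEdge E :=
        prod_le_prod (fun e he => prod_nonneg fun z hz =>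
          (hE.pos hθ0 hθ hn e (hTE he) z hz).le) fun e he => le_hEdge (hTE he)
    _ = hEdge E ^ T.card := prod_const _

end IsCover

lemma exists_isCover {r n : ℕ} {θ : ℝ} (hr : 0 < r) (hθ : θ < 1 / ((r : ℝ) + 1)) (hn : 0 < n) :
    ∃ E, IsCover r θ n E := by
  classical
  have hg := (coverPoint_strictMono (s := r) hθ hn).injective
  let block : ℕ → Finset ℕ := fun i => Ico (r * i) (r * i + r)
  have hdiv : ∀ i j, j ∈ block i → j / r = i := by
    intro i j hj
    rw [mem_Ico] at hj
    exact Nat.div_eq_of_lt_le (by rw [mul_comm]; exact hj.1)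
      (by rw [add_mul, one_mul, mul_comm]; exact hj.2)
  refine ⟨(range n).image fun i => (block i).image (coverPoint r θ n), ?_, ?_, ?_⟩
  · intro e he
    obtain ⟨i, -, rfl⟩ := mem_image.1 he
    rw [card_image_of_injective _ hg, Nat.card_Ico, Nat.add_sub_cancel_left]
  · intro e he e' he' hii'
    obtain ⟨i, -, rfl⟩ := mem_image.1 he
    obtain ⟨i', -, rfl⟩ := mem_image.1 he'
    refine (disjoint_image hg).2 (disjoint_left.2 fun j hj hj' => hii' ?_)
    rw [← hdiv i j hj, hdiv i' j hj']
  · intro y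
    rw [coverVertexSet_eq_image]
    constructor
    · rintro ⟨e, he, hy⟩
      obtain ⟨i, hi, rfl⟩ := mem_image.1 he
      obtain ⟨j, hj, rfl⟩ := mem_image.1 hy
      refine mem_image_of_mem _ (mem_range.2 ?_)
      have := (mem_Ico.1 hj).2
      rw [mem_range] at hi
      nlinarith
    · intro hy
      obtain ⟨j, hj, rfl⟩ := mem_image.1 hy
      rw [mem_range] at hj
      refine ⟨_, mem_image_of_mem _ (mem_range.2 ((Nat.div_lt_iff_lt_mul hr).2 (by linarith))),
        mem_image_of_mem _ ?_⟩
      exact mem_Ico.2 ⟨Nat.mul_div_le j r, by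
        linarith [Nat.div_add_mod j r, Nat.mod_lt j hr]⟩

lemma exists_add_nat_mul_le_lt {θ φ h : ℝ} (hθφ : θ ≤ φ) (hh : 0 < h) :
    ∃ t : ℕ, θ + t * h ≤ φ ∧ φ < θ + t * h + h := by
  refine ⟨⌊(φ - θ) / h⌋₊, ?_, ?_⟩
  · have := Nat.floor_le (div_nonneg (sub_nonneg.2 hθφ) hh.le)
    rw [le_div_iff₀ hh] at this
    linarith
  · have := Nat.lt_floor_add_one ((φ - θ) / h)
    rw [div_lt_iff₀ hh] at this
    linarith

section CoverBounds

variable {r n : ℕ} {θ : ℝ} {E : Finset (Finset ℝ)}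

lemma pow_le_hEdge (hE : IsCover r θ n E) (hr : 0 < r) (hθ0 : 0 ≤ θ)
    (hθ : θ < 1 / ((r : ℝ) + 1)) (hn : 0 < n) : (1 / ((r : ℝ) + 1)) ^ r ≤ hEdge E := by
  obtain ⟨k, -, hk, hprod⟩ := hE.exists_prod_le_hEdge_pow hr hθ0 hθ hn (n - 1)
  have hc : ∀ i ∈ range (r * k), 1 / ((r : ℝ) + 1) ≤ coverPoint r θ n (n - 1 + i) := by
    intro i _
    have hnR : (n : ℝ) ≠ 0 := by positivity
    have : θ + n * ((1 / ((r : ℝ) + 1) - θ) / n) = 1 / ((r : ℝ) + 1) := by field_simp; ring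
    rw [coverPoint_add, Nat.cast_sub hn, Nat.cast_one]
    have : (0 : ℝ) ≤ i * ((1 / ((r : ℝ) + 1) - θ) / n) :=
      mul_nonneg i.cast_nonneg (div_nonneg (by linarith) n.cast_nonneg)
    linarith
  have hpow : ((1 / ((r : ℝ) + 1)) ^ r) ^ k ≤ hEdge E ^ k := by
    rw [← pow_mul, ← card_range (r * k), ← prod_const]
    exact (prod_le_prod (fun _ _ => by positivity) hc).trans hprod
  exact le_of_pow_le_pow_left₀ (by omega) (hE.hEdge_nonneg hθ0 hθ hn) hpow

lemma wFun_le_hEdge (hE : IsCover r θ n E) (hr : 0 < r) (hθ0 : 0 ≤ θ)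
    (hθ : θ < 1 / ((r : ℝ) + 1)) (hn : 0 < n) : wFun r θ ≤ hEdge E := by
  obtain ⟨k, hkn, hk, hprod⟩ := hE.exists_prod_le_hEdge_pow hr hθ0 hθ hn 0
  obtain rfl : k = n := le_antisymm hkn (by omega)
  set h := (1 / ((r : ℝ) + 1) - θ) / k
  have hh : 0 < h := div_pos (by linarith) (by exact_mod_cast hn)
  have hkh : (k : ℝ) * h = 1 / ((r : ℝ) + 1) - θ := by simp only [h]; field_simp
  have hpoints : ∀ i, coverPoint r θ k (0 + i) = θ + (i + 1) * h := fun i => by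
    rw [coverPoint_add]; push_cast; ring
  simp only [hpoints] at hprod
  have hsum := logPrimitive_sub_le_sum_log hθ0 hh (r * k)
  rw [show θ + ((r * k : ℕ) : ℝ) * h = maxVertex r θ by rw [maxVertex_eq, ← hkh]; push_cast; ring,
    ← mul_log_wFun hθ0 hθ, ← hkh, mul_comm (k : ℝ) h, mul_assoc] at hsum
  have hpow : wFun r θ ^ k ≤ hEdge E ^ k := by
    refine (pow_le_prod_of_mul_log_le (wFun_pos hθ0 hθ.le) (fun i _ => ?_)
      (le_of_mul_le_mul_left hsum hh)).trans hprod
    have := (i.cast_nonneg (α := ℝ))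
    positivity
  exact le_of_pow_le_pow_left₀ (by omega) (hE.hEdge_nonneg hθ0 hθ hn) hpow

lemma wFun_root_le_hEdge_of_two_le {φ : ℝ} (hE : IsCover r θ n E) (hr : 2 ≤ r) (hφ : 0 < φ)
    (hφc : φ < 1 / ((r : ℝ) + 1)) (hroot : φ * maxVertex r φ ^ (r - 1) = wFun r φ)
    (hθ0 : 0 ≤ θ) (hθφ : θ ≤ φ) (hn : 0 < n) : wFun r φ ≤ hEdge E := by
  have hθ : θ < 1 / ((r : ℝ) + 1) := hθφ.trans_lt hφc
  set h := (1 / ((r : ℝ) + 1) - θ) / n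
  have hh : 0 < h := div_pos (by linarith) (by exact_mod_cast hn)
  have hnh : (n : ℝ) * h = 1 / ((r : ℝ) + 1) - θ := by simp only [h]; field_simp
  obtain ⟨t, htφ, hφt⟩ := exists_add_nat_mul_le_lt hθφ hh
  have htn : t < n := by
    by_contra! hnt
    have : (n : ℝ) * h ≤ t * h := by gcongr
    linarith
  obtain ⟨k, -, hk, hprod⟩ := hE.exists_prod_le_hEdge_pow (by omega) hθ0 hθ hn t
  simp only [coverPoint_add] at hprod
  have hr1 : ((r - 1 : ℕ) : ℝ) = r - 1 := by rw [Nat.cast_sub (by omega), Nat.cast_one]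
  have hW : log (wFun r φ) = log φ + (r - 1) * log (maxVertex r φ) := by
    rw [← hroot, log_mul hφ.ne' (pow_pos (hφ.trans_le (le_maxVertex hφc.le)) _).ne', log_pow, hr1]
  have hD := mul_log_wFun hφ.le hφc
  rw [hW] at hD
  have hlog := mul_log_le_sum_log_grid (m₀ := n - t) (m := k) hr hφ hφc.le (maxVertex_eq r φ) hD.symm
    (by positivity) htφ hφt hh (by omega) (by rw [Nat.cast_sub htn.le]; linarith) hk
  rw [← hW] at hlog
  have hpow : wFun r φ ^ k ≤ hEdge E ^ k := by
    refine (pow_le_prod_of_mul_log_le (wFun_pos hφ.le hφc.le) (fun i _ => ?_) hlog).trans hprod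
    have := (i.cast_nonneg (α := ℝ))
    positivity
  exact le_of_pow_le_pow_left₀ (by omega) (hE.hEdge_nonneg hθ0 hθ hn) hpow

lemma wFun_root_le_hEdge {φ : ℝ} (hE : IsCover r θ n E) (hr : 0 < r) (hφ : 0 < φ)
    (hφc : φ ≤ 1 / ((r : ℝ) + 1)) (hroot : φ * maxVertex r φ ^ (r - 1) = wFun r φ)
    (hθ0 : 0 ≤ θ) (hθ : θ < 1 / ((r : ℝ) + 1)) (hθφ : θ ≤ φ) (hn : 0 < n) :
    wFun r φ ≤ hEdge E := by
  rcases hφc.eq_or_lt with rfl | hφc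
  · rw [wFun, if_pos rfl]
    exact pow_le_hEdge hE hr hθ0 hθ hn
  obtain rfl | hr := (Nat.one_le_iff_ne_zero.2 hr.ne').eq_or_lt
  · calc wFun 1 φ ≤ 1 / 2 := wFun_one_le hφ.le (by norm_num at hφc ⊢; linarith)
      _ = (1 / ((1 : ℕ) + 1 : ℝ)) ^ 1 := by norm_num
      _ ≤ hEdge E := pow_le_hEdge hE one_pos hθ0 hθ hn
  · exact wFun_root_le_hEdge_of_two_le hE hr hφ hφc hroot hθ0 hθφ hn

end CoverBounds

lemma le_one_div_succ_of_isLeast {r : ℕ} {φ : ℝ} (hr : 0 < r)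
    (hφ : IsLeast {θ : ℝ | 0 < θ ∧
      θ * (1 - 1 / ((r : ℝ) + 1) - ((r : ℝ) - 1) * θ) ^ (r - 1) = wFun r θ} φ) :
    φ ≤ 1 / ((r : ℝ) + 1) := by
  refine hφ.2 ⟨by positivity, ?_⟩
  rw [wFun, if_pos rfl, show 1 - 1 / ((r : ℝ) + 1) - ((r : ℝ) - 1) * (1 / ((r : ℝ) + 1)) =
    1 / ((r : ℝ) + 1) by field_simp; ring, ← pow_succ', Nat.sub_add_cancel hr]

/-- **Theorem.** Let `r ≥ 1` and let `φ_r` be the smallest positive solution of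
`θ·(1 − 1/(r+1) − (r−1)θ)^{r−1} = w(r,θ)`.  With `H(r,θ) = w(r,φ_r)` for
`0 ≤ θ ≤ φ_r` and `H(r,θ) = w(r,θ)` for `φ_r ≤ θ ≤ 1/(r+1)`, one has
`h(r,θ) ≥ H(r,θ)` on `[0,1/(r+1)]`. -/
theorem hCov_ge_H (r : ℕ) (hr : 1 ≤ r) (φ : ℝ)
    (hφ : IsLeast {θ : ℝ | 0 < θ ∧
      θ * (1 - 1 / ((r : ℝ) + 1) - ((r : ℝ) - 1) * θ) ^ (r - 1) = wFun r θ} φ) :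
    ∀ θ : ℝ, 0 ≤ θ → θ ≤ 1 / ((r : ℝ) + 1) →
      (if θ ≤ φ then wFun r φ else wFun r θ) ≤ hCov r θ := by
  intro θ hθ0 hθc
  have hφc := le_one_div_succ_of_isLeast hr hφ
  rcases hθc.eq_or_lt with rfl | hθc
  · have hH : (if 1 / ((r : ℝ) + 1) ≤ φ then wFun r φ else wFun r (1 / ((r : ℝ) + 1))) =
        wFun r (1 / ((r : ℝ) + 1)) := by
      split_ifs with h
      · rw [le_antisymm hφc h]
      · rfl
    rw [hH, hCov, if_pos rfl, wFun, if_pos rfl]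
  rw [hCov, if_neg hθc.ne]
  refine le_csInf ⟨_, 1, le_rfl, rfl⟩ ?_
  rintro _ ⟨n, hn, rfl⟩
  obtain ⟨E₀, hE₀⟩ := exists_isCover hr hθc hn
  refine le_csInf ⟨_, E₀, hE₀, rfl⟩ ?_
  rintro _ ⟨E, hE, rfl⟩
  split_ifs with hθφ
  · exact wFun_root_le_hEdge hE hr hφ.1.1 hφc hφ.1.2 hθ0 hθc hθφ hn
  · exact wFun_le_hEdge hE hr hθ0 hθc hn

end ListCol
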